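/- arXiv:1804.02897 — 2 statements merged into one kernel-verified Lean document; each statement's English description precedes it below -/
import Mathlib

section
/- Let n ≥ 2 be a natural number and α, β real numbers with β > 0, α² < n·β and α² ≥ β. Let M be a real n×n matrix with sum of entries n·α and sum of squared entries n·β whose determinant is maximal among all such matrices (i.e. det X ≤ det M for every real n×n matrix X with s(X) = n·α and q(X) = n·β). Set δ := (α² − β)/(n−1). Then: every row sum of M equals α and every column sum of M equals α; M·Mᵀ = (β − δ)·I + δ·J; and det M = |α|·(β − δ)^((n−1)/2). -/
/-!
Write `ρ = β - δ`, so that `α² = ρ + n δ`. For `X` with `s(X) = n α` and `q(X) = n β`, let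
`Y = P X`, where `P` multiplies the all-ones vector by some `u` with `u² α² = ρ` and fixes its
orthogonal complement. Then `det Y = u det X`, and since the column sums of `X` have square sum
at least `n α²` while `u² ≤ 1`, `q(Y) ≤ n ρ`. AM-GM on the eigenvalues of `Y Yᵀ` gives
`det(Y)² ≤ (q(Y) / n)ⁿ ≤ ρⁿ`, i.e. `det(X)² ≤ α² ρⁿ⁻¹`, with equality only if `Y Yᵀ = ρ I`,
i.e. `X Xᵀ = ρ P⁻² = ρ I + δ J`. The bound is attained by `√ρ P⁻¹` (with two columns swapped
when `α < 0`), so the maximiser `M` attains it, and its row and column sums are read off `M Mᵀ`.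
-/

open Matrix Finset

local notation "𝟙" => Matrix.of fun _ _ => (1 : ℝ)

namespace Real

variable {ι : Type*} (s : Finset ι) {z : ι → ℝ}

theorem prod_le_sum_div_card_pow (hz : ∀ i ∈ s, 0 ≤ z i) :
    ∏ i ∈ s, z i ≤ ((∑ i ∈ s, z i) / #s) ^ #s := by
  rcases s.eq_empty_or_nonempty with rfl | hs
  · simp
  have hcard : (#s : ℝ) ≠ 0 := by exact_mod_cast hs.card_pos.ne'
  have amgm := geom_mean_le_arith_mean_weighted s (fun _ ↦ (#s : ℝ)⁻¹) z
    (fun _ _ ↦ by positivity) (by simp [hcard]) hz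
  rw [finsetProd_rpow s z hz, ← mul_sum, inv_mul_eq_div] at amgm
  calc ∏ i ∈ s, z i = ((∏ i ∈ s, z i) ^ (#s : ℝ)⁻¹) ^ #s :=
        (rpow_inv_natCast_pow (prod_nonneg hz) hs.card_pos.ne').symm
    _ ≤ _ := pow_le_pow_left₀ (rpow_nonneg (prod_nonneg hz) _) amgm _

theorem eq_sum_div_card_of_sum_div_card_pow_le_prod (hz : ∀ i ∈ s, 0 ≤ z i)
    (h : ((∑ i ∈ s, z i) / #s) ^ #s ≤ ∏ i ∈ s, z i) :
    ∀ j ∈ s, z j = (∑ i ∈ s, z i) / #s := by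
  rcases s.eq_empty_or_nonempty with rfl | hs
  · simp
  have hcard : (#s : ℝ) ≠ 0 := by exact_mod_cast hs.card_pos.ne'
  have hmean : 0 ≤ (∑ i ∈ s, z i) / #s := div_nonneg (sum_nonneg hz) (Nat.cast_nonneg _)
  have hgeom : ∏ i ∈ s, z i ^ (#s : ℝ)⁻¹ = ∑ i ∈ s, (#s : ℝ)⁻¹ * z i := by
    rw [finsetProd_rpow s z hz, ← mul_sum, inv_mul_eq_div,
      (prod_le_sum_div_card_pow s hz).antisymm h, pow_rpow_inv_natCast hmean hs.card_pos.ne']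
  intro j hj
  rw [(geom_mean_eq_arith_mean_weighted_iff_of_pos' s (fun _ ↦ (#s : ℝ)⁻¹) z
    (fun _ _ ↦ by positivity) (by simp [hcard]) hz).1 hgeom j hj, ← mul_sum, inv_mul_eq_div]

end Real

namespace Finset

variable {ι : Type*} {s : Finset ι} {c : ι → ℝ} {a : ℝ}

theorem card_mul_sq_le_sum_sq_of_sum_eq (h : ∑ i ∈ s, c i = #s * a) :
    #s * a ^ 2 ≤ ∑ i ∈ s, c i ^ 2 := by
  rcases s.eq_empty_or_nonempty with rfl | hs
  · simp
  have hcard : (0 : ℝ) < #s := by exact_mod_cast hs.card_pos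
  have := sq_sum_le_card_mul_sum_sq (s := s) (f := c)
  rw [h, mul_pow, sq (#s : ℝ), mul_assoc] at this
  exact le_of_mul_le_mul_left this hcard

theorem eq_of_sum_eq_of_sum_sq_eq (h : ∑ i ∈ s, c i = #s * a)
    (hsq : ∑ i ∈ s, c i ^ 2 = #s * a ^ 2) : ∀ i ∈ s, c i = a := by
  have hvar : ∑ i ∈ s, (c i - a) ^ 2 = 0 := by
    simp only [sub_sq, sum_add_distrib, sum_sub_distrib, ← sum_mul, ← mul_sum, sum_const,
      nsmul_eq_mul, h, hsq]
    ring
  intro i hi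
  exact sub_eq_zero.1 <| pow_eq_zero_iff two_ne_zero |>.1 <|
    (sum_eq_zero_iff_of_nonneg fun j _ ↦ sq_nonneg (c j - a)).1 hvar i hi

end Finset

namespace Matrix

variable {ι : Type*} [Fintype ι]

theorem sum_sum_sq_eq_trace_mul_transpose (X : Matrix ι ι ℝ) :
    ∑ i, ∑ j, X i j ^ 2 = (X * Xᵀ).trace := by
  simp [trace, mul_apply, sq]

theorem posSemidef_mul_transpose_self (X : Matrix ι ι ℝ) : (X * Xᵀ).PosSemidef := by
  simpa using posSemidef_self_mul_conjTranspose X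

theorem sum_mul_transpose_apply (X : Matrix ι ι ℝ) (i : ι) :
    ∑ j, (X * Xᵀ) i j = ∑ k, X i k * ∑ j, X j k := by
  simp only [mul_apply, transpose_apply, mul_sum]
  exact sum_comm

theorem sum_sum_mul_transpose (X : Matrix ι ι ℝ) :
    ∑ i, ∑ j, (X * Xᵀ) i j = ∑ k, (∑ i, X i k) ^ 2 := by
  simp only [sum_mul_transpose_apply, sq, sum_mul]
  exact sum_comm

theorem ones_mul_ones : (𝟙 : Matrix ι ι ℝ) * 𝟙 = (Fintype.card ι : ℝ) • 𝟙 := by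
  ext; simp [mul_apply]

variable [DecidableEq ι]

theorem sum_smul_one_add_smul_ones_apply (a b : ℝ) (i : ι) :
    ∑ j, (a • 1 + b • 𝟙 : Matrix ι ι ℝ) i j = a + Fintype.card ι * b := by
  simp [sum_add_distrib, one_apply]

theorem PosSemidef.det_le_trace_div_card_pow {A : Matrix ι ι ℝ} (hA : A.PosSemidef) :
    A.det ≤ (A.trace / Fintype.card ι) ^ Fintype.card ι := by
  rw [hA.isHermitian.det_eq_prod_eigenvalues, hA.isHermitian.trace_eq_sum_eigenvalues]
  simpa using Real.prod_le_sum_div_card_pow univ fun i _ ↦ hA.eigenvalues_nonneg i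

theorem PosSemidef.eq_smul_one_of_trace_div_card_pow_le_det {A : Matrix ι ι ℝ}
    (hA : A.PosSemidef) (h : (A.trace / Fintype.card ι) ^ Fintype.card ι ≤ A.det) :
    A = (A.trace / Fintype.card ι) • 1 := by
  have hev := Real.eq_sum_div_card_of_sum_div_card_pow_le_prod univ
    (fun i _ ↦ hA.eigenvalues_nonneg i)
    (by simpa [hA.isHermitian.det_eq_prod_eigenvalues, hA.isHermitian.trace_eq_sum_eigenvalues]
      using h)
  have hdiag : diagonal (RCLike.ofReal ∘ hA.isHermitian.eigenvalues) =
      (A.trace / Fintype.card ι) • (1 : Matrix ι ι ℝ) := by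
    ext i j
    simp [diagonal, one_apply, hev i, hA.isHermitian.trace_eq_sum_eigenvalues]
  conv_lhs => rw [hA.isHermitian.spectral_theorem, hdiag, map_smul, map_one]

theorem det_sq_le_sum_sum_sq_div_card_pow (X : Matrix ι ι ℝ) :
    X.det ^ 2 ≤ ((∑ i, ∑ j, X i j ^ 2) / Fintype.card ι) ^ Fintype.card ι := by
  have := (posSemidef_mul_transpose_self X).det_le_trace_div_card_pow
  rwa [det_mul, det_transpose, ← sq, ← sum_sum_sq_eq_trace_mul_transpose] at this

theorem mul_transpose_eq_smul_one_of_sum_sum_sq_div_card_pow_le_det_sq (X : Matrix ι ι ℝ)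
    (h : ((∑ i, ∑ j, X i j ^ 2) / Fintype.card ι) ^ Fintype.card ι ≤ X.det ^ 2) :
    X * Xᵀ = ((∑ i, ∑ j, X i j ^ 2) / Fintype.card ι) • 1 := by
  rw [sum_sum_sq_eq_trace_mul_transpose] at h ⊢
  refine (posSemidef_mul_transpose_self X).eq_smul_one_of_trace_div_card_pow_le_det ?_
  rwa [det_mul, det_transpose, ← sq]

theorem exists_det_eq_neg [Nontrivial ι] (X : Matrix ι ι ℝ) :
    ∃ Y : Matrix ι ι ℝ, ∑ i, ∑ j, Y i j = ∑ i, ∑ j, X i j ∧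
      ∑ i, ∑ j, Y i j ^ 2 = ∑ i, ∑ j, X i j ^ 2 ∧ Y.det = -X.det := by
  obtain ⟨k, l, hkl⟩ := exists_pair_ne ι
  refine ⟨X.submatrix id (Equiv.swap k l), ?_, ?_, ?_⟩
  · exact sum_congr rfl fun i _ ↦ Equiv.sum_comp (Equiv.swap k l) (X i)
  · exact sum_congr rfl fun i _ ↦ Equiv.sum_comp (Equiv.swap k l) (fun j ↦ X i j ^ 2)
  · simp [det_permute', Equiv.Perm.sign_swap hkl]

/-- Multiplication by `u` on the all-ones vector and the identity on its orthogonal complement. -/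
noncomputable def scaleAlongOnes (u : ℝ) : Matrix ι ι ℝ :=
  1 + ((u - 1) / Fintype.card ι) • 𝟙

@[simp]
theorem scaleAlongOnes_one : (scaleAlongOnes 1 : Matrix ι ι ℝ) = 1 := by
  simp [scaleAlongOnes]

@[simp]
theorem transpose_scaleAlongOnes (u : ℝ) :
    (scaleAlongOnes u : Matrix ι ι ℝ)ᵀ = scaleAlongOnes u := by
  ext i j; simp [scaleAlongOnes, one_apply, eq_comm]

theorem scaleAlongOnes_mul_apply (u : ℝ) (X : Matrix ι ι ℝ) (i j : ι) :
    (scaleAlongOnes u * X : Matrix ι ι ℝ) i j =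
      X i j + (u - 1) / Fintype.card ι * ∑ k, X k j := by
  rw [scaleAlongOnes, add_mul, one_mul, add_apply, Matrix.smul_mul, smul_apply, mul_apply]
  simp [mul_sum]

variable [Nonempty ι]

theorem scaleAlongOnes_mul_scaleAlongOnes (u v : ℝ) :
    (scaleAlongOnes u : Matrix ι ι ℝ) * scaleAlongOnes v = scaleAlongOnes (u * v) := by
  have hcard : (Fintype.card ι : ℝ) ≠ 0 := by positivity
  simp only [scaleAlongOnes, add_mul, mul_add, one_mul, mul_one, smul_mul_smul_comm, ones_mul_ones,
    smul_smul, add_assoc, ← add_smul]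
  congr 2
  field_simp
  ring

theorem det_scaleAlongOnes (u : ℝ) : (scaleAlongOnes u : Matrix ι ι ℝ).det = u := by
  have hones : ((u - 1) / Fintype.card ι) • (𝟙 : Matrix ι ι ℝ) =
      replicateCol Unit (fun _ ↦ (u - 1) / Fintype.card ι) *
        replicateRow Unit (fun _ ↦ (1 : ℝ)) := by
    ext; simp [mul_apply]
  have hcard : (Fintype.card ι : ℝ) ≠ 0 := by positivity
  rw [scaleAlongOnes, hones, det_one_add_replicateCol_mul_replicateRow]
  simp [dotProduct]
  field_simp
  ring

theorem sum_sum_scaleAlongOnes_mul (u : ℝ) (X : Matrix ι ι ℝ) :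
    ∑ i, ∑ j, (scaleAlongOnes u * X : Matrix ι ι ℝ) i j = u * ∑ i, ∑ j, X i j := by
  have hcard : (Fintype.card ι : ℝ) ≠ 0 := by positivity
  simp only [scaleAlongOnes_mul_apply, sum_add_distrib, sum_const, card_univ, nsmul_eq_mul]
  rw [sum_comm (f := fun i j ↦ X i j), ← mul_sum]
  field_simp
  ring

theorem sum_sum_sq_scaleAlongOnes_mul (u : ℝ) (X : Matrix ι ι ℝ) :
    ∑ i, ∑ j, (scaleAlongOnes u * X : Matrix ι ι ℝ) i j ^ 2 =
      ∑ i, ∑ j, X i j ^ 2 + (u ^ 2 - 1) / Fintype.card ι * ∑ j, (∑ i, X i j) ^ 2 := by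
  have hcard : (Fintype.card ι : ℝ) ≠ 0 := by positivity
  simp only [scaleAlongOnes_mul_apply]
  rw [sum_comm, sum_comm (f := fun i j ↦ X i j ^ 2), mul_sum, ← sum_add_distrib]
  refine sum_congr rfl fun j _ ↦ ?_
  simp only [add_sq, sum_add_distrib, ← sum_mul, ← mul_sum, sum_const, card_univ, nsmul_eq_mul]
  field_simp
  ring

end Matrix

section MaximalDeterminant

variable {n : ℕ} [NeZero n] {α ρ δ : ℝ}

theorem sum_sum_sq_scaleAlongOnes_mul_le (hρ : 0 < ρ) (hδ : 0 ≤ δ)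
    (hα : α ^ 2 = ρ + n * δ)
    {X : Matrix (Fin n) (Fin n) ℝ} (hs : ∑ i, ∑ j, X i j = n * α)
    (hq : ∑ i, ∑ j, X i j ^ 2 = n * (ρ + δ)) {u : ℝ} (hu : u ^ 2 * α ^ 2 = ρ) :
    ∑ i, ∑ j, (scaleAlongOnes u * X : Matrix (Fin n) (Fin n) ℝ) i j ^ 2 ≤ n * ρ := by
  have hn : (n : ℝ) ≠ 0 := NeZero.ne _
  have hcols : n * α ^ 2 ≤ ∑ j, (∑ i, X i j) ^ 2 := by
    simpa using card_mul_sq_le_sum_sq_of_sum_eq (s := univ) (c := fun j ↦ ∑ i, X i j)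
      (a := α) (by rw [card_univ, Fintype.card_fin, ← hs]; exact sum_comm)
  have hu1 : u ^ 2 - 1 ≤ 0 := by nlinarith [mul_nonneg (Nat.cast_nonneg n) hδ]
  rw [sum_sum_sq_scaleAlongOnes_mul, hq, Fintype.card_fin]
  calc n * (ρ + δ) + (u ^ 2 - 1) / n * ∑ j, (∑ i, X i j) ^ 2
      ≤ n * (ρ + δ) + (u ^ 2 - 1) / n * (n * α ^ 2) :=
        add_le_add le_rfl (mul_le_mul_of_nonpos_left hcols (div_nonpos_of_nonpos_of_nonneg hu1
          (Nat.cast_nonneg n)))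
    _ = n * ρ := by
        field_simp
        linear_combination hu - hα

theorem det_sq_scaleAlongOnes_mul_le (hρ : 0 < ρ) (hδ : 0 ≤ δ)
    (hα : α ^ 2 = ρ + n * δ)
    {X : Matrix (Fin n) (Fin n) ℝ} (hs : ∑ i, ∑ j, X i j = n * α)
    (hq : ∑ i, ∑ j, X i j ^ 2 = n * (ρ + δ)) {u : ℝ} (hu : u ^ 2 * α ^ 2 = ρ) :
    (scaleAlongOnes u * X : Matrix (Fin n) (Fin n) ℝ).det ^ 2 ≤ ρ ^ n := by
  have hn : (0 : ℝ) < n := Nat.cast_pos.2 (NeZero.pos n)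
  set Y : Matrix (Fin n) (Fin n) ℝ := scaleAlongOnes u * X
  calc Y.det ^ 2 ≤ ((∑ i, ∑ j, Y i j ^ 2) / n) ^ n := by
        simpa only [Fintype.card_fin] using det_sq_le_sum_sum_sq_div_card_pow Y
    _ ≤ ρ ^ n := by
        refine pow_le_pow_left₀ (by positivity) ((div_le_iff₀ hn).2 ?_) n
        linarith [sum_sum_sq_scaleAlongOnes_mul_le hρ hδ hα hs hq hu]

theorem det_sq_le_of_sum_eq_of_sum_sq_eq (hρ : 0 < ρ) (hδ : 0 ≤ δ)
    (hα : α ^ 2 = ρ + n * δ)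
    {X : Matrix (Fin n) (Fin n) ℝ} (hs : ∑ i, ∑ j, X i j = n * α)
    (hq : ∑ i, ∑ j, X i j ^ 2 = n * (ρ + δ)) :
    X.det ^ 2 ≤ α ^ 2 * ρ ^ (n - 1) := by
  obtain ⟨u, hu⟩ : ∃ u : ℝ, u ^ 2 * α ^ 2 = ρ :=
    ⟨√ρ / α, by rw [div_pow, Real.sq_sqrt hρ.le, div_mul_cancel₀ _ (by nlinarith)]⟩
  have hY := det_sq_scaleAlongOnes_mul_le hρ hδ hα hs hq hu
  rw [det_mul, det_scaleAlongOnes, mul_pow, ← mul_pow_sub_one (NeZero.ne n) ρ] at hY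
  refine le_of_mul_le_mul_left ?_ hρ
  calc ρ * X.det ^ 2 = α ^ 2 * (u ^ 2 * X.det ^ 2) := by rw [← hu]; ring
    _ ≤ α ^ 2 * (ρ * ρ ^ (n - 1)) := by gcongr
    _ = ρ * (α ^ 2 * ρ ^ (n - 1)) := by ring

theorem mul_transpose_eq_of_le_det_sq (hρ : 0 < ρ) (hδ : 0 ≤ δ)
    (hα : α ^ 2 = ρ + n * δ)
    {X : Matrix (Fin n) (Fin n) ℝ} (hs : ∑ i, ∑ j, X i j = n * α)
    (hq : ∑ i, ∑ j, X i j ^ 2 = n * (ρ + δ)) (hdet : α ^ 2 * ρ ^ (n - 1) ≤ X.det ^ 2) :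
    X * Xᵀ = ρ • 1 + δ • 𝟙 := by
  have hn : (0 : ℝ) < n := Nat.cast_pos.2 (NeZero.pos n)
  obtain ⟨u, hu⟩ : ∃ u : ℝ, u ^ 2 * α ^ 2 = ρ :=
    ⟨√ρ / α, by rw [div_pow, Real.sq_sqrt hρ.le, div_mul_cancel₀ _ (by nlinarith)]⟩
  have hu0 : u ≠ 0 := by rintro rfl; simp at hu; linarith
  set Y : Matrix (Fin n) (Fin n) ℝ := scaleAlongOnes u * X with hY
  have hYdet : ρ ^ n ≤ Y.det ^ 2 :=
    calc ρ ^ n = u ^ 2 * (α ^ 2 * ρ ^ (n - 1)) := by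
          rw [← mul_assoc, hu, mul_pow_sub_one (NeZero.ne n)]
      _ ≤ u ^ 2 * X.det ^ 2 := by gcongr
      _ = Y.det ^ 2 := by rw [hY, det_mul, det_scaleAlongOnes, mul_pow]
  have hc : (∑ i, ∑ j, Y i j ^ 2) / n = ρ := by
    refine le_antisymm ((div_le_iff₀ hn).2 ?_) ((pow_le_pow_iff_left₀ hρ.le (by positivity)
      (NeZero.ne n)).1 (hYdet.trans ?_))
    · linarith [sum_sum_sq_scaleAlongOnes_mul_le hρ hδ hα hs hq hu]
    · simpa only [Fintype.card_fin] using det_sq_le_sum_sum_sq_div_card_pow Y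
  have hYY : Y * Yᵀ = ρ • 1 := by
    simpa only [Fintype.card_fin, hc] using
      mul_transpose_eq_smul_one_of_sum_sum_sq_div_card_pow_le_det_sq Y
        (by simpa only [Fintype.card_fin, hc] using hYdet)
  have hX : X = scaleAlongOnes u⁻¹ * Y := by
    rw [hY, ← mul_assoc, scaleAlongOnes_mul_scaleAlongOnes, inv_mul_cancel₀ hu0,
      scaleAlongOnes_one, one_mul]
  calc X * Xᵀ = scaleAlongOnes u⁻¹ * (Y * Yᵀ) * scaleAlongOnes u⁻¹ := by
        rw [hX, transpose_mul, transpose_scaleAlongOnes]; simp only [mul_assoc]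
    _ = ρ • scaleAlongOnes (u⁻¹ * u⁻¹) := by
        rw [hYY, mul_smul_comm, mul_one, Matrix.smul_mul, scaleAlongOnes_mul_scaleAlongOnes]
    _ = ρ • 1 + δ • 𝟙 := by
        rw [scaleAlongOnes, smul_add, smul_smul, Fintype.card_fin]
        congr 2
        field_simp
        linear_combination u ^ 2 * hα - hu

theorem exists_sum_eq_sum_sq_eq_det_eq (hρ : 0 < ρ) (hα : α ^ 2 = ρ + n * δ) :
    ∃ X : Matrix (Fin n) (Fin n) ℝ, ∑ i, ∑ j, X i j = n * α ∧
      ∑ i, ∑ j, X i j ^ 2 = n * (ρ + δ) ∧ X.det = α * √ρ ^ (n - 1) := by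
  have hn : (n : ℝ) ≠ 0 := NeZero.ne _
  have hr : √ρ ≠ 0 := (Real.sqrt_pos.2 hρ).ne'
  refine ⟨scaleAlongOnes (α / √ρ) * (√ρ • 1), ?_, ?_, ?_⟩
  · rw [sum_sum_scaleAlongOnes_mul]
    simp [one_apply]
    field_simp
  · rw [sum_sum_sq_scaleAlongOnes_mul]
    simp [one_apply, Real.sq_sqrt hρ.le]
    field_simp
    rw [Real.sq_sqrt hρ.le]
    linear_combination ρ * hα
  · rw [det_mul, det_scaleAlongOnes, det_smul, det_one, Fintype.card_fin,
      ← mul_pow_sub_one (NeZero.ne n)]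
    field_simp

omit [NeZero n] in
theorem exists_sum_eq_sum_sq_eq_det_eq_abs (hn : 2 ≤ n) (hρ : 0 < ρ)
    (hα : α ^ 2 = ρ + n * δ) :
    ∃ X : Matrix (Fin n) (Fin n) ℝ, ∑ i, ∑ j, X i j = n * α ∧
      ∑ i, ∑ j, X i j ^ 2 = n * (ρ + δ) ∧ X.det = |α| * √ρ ^ (n - 1) := by
  have : NeZero n := ⟨by omega⟩
  have : Nontrivial (Fin n) := Fin.nontrivial_iff_two_le.2 hn
  obtain ⟨X, hs, hq, hdet⟩ := exists_sum_eq_sum_sq_eq_det_eq hρ hα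
  rcases le_or_gt 0 α with hα0 | hα0
  · exact ⟨X, hs, hq, by rw [hdet, abs_of_nonneg hα0]⟩
  · obtain ⟨Y, hsY, hqY, hdetY⟩ := X.exists_det_eq_neg
    exact ⟨Y, hsY.trans hs, hqY.trans hq, by rw [hdetY, hdet, abs_of_neg hα0, neg_mul]⟩

omit [NeZero n] in
theorem sum_col_eq_of_mul_transpose_eq (hα : α ^ 2 = ρ + n * δ)
    {X : Matrix (Fin n) (Fin n) ℝ} (hs : ∑ i, ∑ j, X i j = n * α)
    (h : X * Xᵀ = ρ • 1 + δ • 𝟙) (j : Fin n) : ∑ i, X i j = α := by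
  refine eq_of_sum_eq_of_sum_sq_eq (s := univ) (c := fun j ↦ ∑ i, X i j) ?_ ?_ j (mem_univ j)
  · rw [card_univ, Fintype.card_fin, ← hs]
    exact sum_comm
  · rw [← sum_sum_mul_transpose, h]
    simp only [sum_smul_one_add_smul_ones_apply, sum_const, card_univ, Fintype.card_fin,
      nsmul_eq_mul, hα]

omit [NeZero n] in
theorem sum_row_eq_of_mul_transpose_eq (hα : α ^ 2 = ρ + n * δ) (hα0 : α ≠ 0)
    {X : Matrix (Fin n) (Fin n) ℝ} (hcols : ∀ j, ∑ i, X i j = α)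
    (h : X * Xᵀ = ρ • 1 + δ • 𝟙) (i : Fin n) : ∑ j, X i j = α := by
  have := sum_mul_transpose_apply X i
  simp only [h, sum_smul_one_add_smul_ones_apply, Fintype.card_fin, ← hα, hcols,
    ← sum_mul] at this
  exact mul_right_cancel₀ hα0 (by rw [← this, sq])

end MaximalDeterminant

theorem gasper_maximal_rowsum_case_general (n : ℕ) (hn : 2 ≤ n) (α β : ℝ)
    (h1 : α ^ 2 < n * β) (h2 : β ≤ α ^ 2)
    (M : Matrix (Fin n) (Fin n) ℝ)
    (hs : (∑ i, ∑ j, M i j) = n * α) (hq : (∑ i, ∑ j, (M i j) ^ 2) = n * β)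
    (hmax : ∀ X : Matrix (Fin n) (Fin n) ℝ,
      (∑ i, ∑ j, X i j) = n * α → (∑ i, ∑ j, (X i j) ^ 2) = n * β →
        X.det ≤ M.det)
    (δ : ℝ) (hδ : δ = (α ^ 2 - β) / (n - 1)) :
    (∀ i, (∑ j, M i j) = α) ∧ (∀ j, (∑ i, M i j) = α)
      ∧ M * Mᵀ = (β - δ) • (1 : Matrix (Fin n) (Fin n) ℝ)
          + δ • (Matrix.of fun _ _ => (1 : ℝ))
      ∧ M.det = |α| * (β - δ) ^ (((n : ℝ) - 1) / 2) := by
  have : NeZero n := ⟨by omega⟩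
  have hn1 : (0 : ℝ) < n - 1 := by
    have : (2 : ℝ) ≤ n := by exact_mod_cast hn
    linarith
  have hδ0 : 0 ≤ δ := hδ ▸ div_nonneg (by linarith) hn1.le
  have hρ : 0 < β - δ := by rw [hδ, sub_pos, div_lt_iff₀ hn1]; nlinarith
  have hα : α ^ 2 = (β - δ) + n * δ := by rw [hδ]; field_simp [hn1.ne']; ring
  have hα0 : α ≠ 0 := by rintro rfl; nlinarith
  have hq' : ∑ i, ∑ j, M i j ^ 2 = n * ((β - δ) + δ) := by rw [hq]; ring
  have hsq : (|α| * √(β - δ) ^ (n - 1)) ^ 2 = α ^ 2 * (β - δ) ^ (n - 1) := by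
    rw [mul_pow, sq_abs, ← pow_mul, mul_comm (n - 1), pow_mul, Real.sq_sqrt hρ.le]
  obtain ⟨C, hsC, hqC, hdetC⟩ := exists_sum_eq_sum_sq_eq_det_eq_abs hn hρ hα
  have hdet : M.det = |α| * √(β - δ) ^ (n - 1) := by
    refine le_antisymm ?_ (hdetC ▸ hmax C hsC (by rw [hqC]; ring))
    exact (le_abs_self _).trans <| abs_le_of_sq_le_sq
      (hsq ▸ det_sq_le_of_sum_eq_of_sum_sq_eq hρ hδ0 hα hs hq') (by positivity)
  have hMMt := mul_transpose_eq_of_le_det_sq hρ hδ0 hα hs hq' (by rw [hdet, hsq])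
  have hcols := sum_col_eq_of_mul_transpose_eq hα hs hMMt
  refine ⟨sum_row_eq_of_mul_transpose_eq hα hα0 hcols hMMt, hcols, hMMt, ?_⟩
  rw [hdet, Real.sqrt_eq_rpow, ← Real.rpow_natCast, ← Real.rpow_mul hρ.le,
    Nat.cast_sub (by omega : 1 ≤ n), Nat.cast_one]
  ring_nf

theorem gasper_maximal_rowsum_case (n : ℕ) (hn : 2 ≤ n) (α β : ℝ)
    (hβ : 0 < β) (h1 : α ^ 2 < n * β) (h2 : β ≤ α ^ 2)
    (M : Matrix (Fin n) (Fin n) ℝ)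
    (hs : (∑ i, ∑ j, M i j) = n * α) (hq : (∑ i, ∑ j, (M i j) ^ 2) = n * β)
    (hmax : ∀ X : Matrix (Fin n) (Fin n) ℝ,
      (∑ i, ∑ j, X i j) = n * α → (∑ i, ∑ j, (X i j) ^ 2) = n * β →
        X.det ≤ M.det)
    (δ : ℝ) (hδ : δ = (α ^ 2 - β) / (n - 1)) :
    (∀ i, (∑ j, M i j) = α) ∧ (∀ j, (∑ i, M i j) = α)
      ∧ M * Mᵀ = (β - δ) • (1 : Matrix (Fin n) (Fin n) ℝ)
          + δ • (Matrix.of fun _ _ => (1 : ℝ))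
      ∧ M.det = |α| * (β - δ) ^ (((n : ℝ) - 1) / 2) :=
  gasper_maximal_rowsum_case_general n hn α β h1 h2 M hs hq hmax δ hδ
end

section
/- Let n ≥ 2 be a natural number and M a real n×n matrix. Set α := s(M)/n, β := q(M)/n and κ := (n·β − α²)/(n−1). If α² ≥ β, then |det M| ≤ |α|·κ^((n−1)/2), and moreover |α|·κ^((n−1)/2) ≤ β^(n/2), with this last inequality strict when α² > β. -/
/-!
With `μ` the eigenvalues of `Mᴴ * M`, we have `det M ^ 2 = ∏ μᵢ` and `∑ μᵢ = q(M) = n β`.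
Testing `Mᴴ * M` on the all-ones vector and applying Cauchy–Schwarz to the row sums yields an
eigenvalue `μⱼ ≥ α²`, and AM-GM on the remaining eigenvalues gives
`det M ^ 2 ≤ g μⱼ` for `g u = u * ((n β - u) / (n - 1)) ^ (n - 1)`. This `g` is strictly
decreasing on `[β, n β]`, which contains `β ≤ α² ≤ μⱼ`; and `g (α²) = α² κ ^ (n - 1)`,
`g β = β ^ n`.
-/

open Finset Matrix
open scoped ComplexOrder

theorem strictAntiOn_mul_sub_div_pow (T : ℝ) {c : ℝ} (hc : 0 < c) (m : ℕ) :
    StrictAntiOn (fun u : ℝ => u * ((T - u) / c) ^ m) (Set.Icc (T / (m + 1)) T) := by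
  refine strictAntiOn_of_deriv_neg (convex_Icc _ _) (by fun_prop) fun u hu => ?_
  rw [interior_Icc] at hu
  obtain ⟨hlo, hhi⟩ := hu
  obtain _ | k := m
  · norm_num at hlo; linarith
  have hderiv : HasDerivAt (fun u : ℝ => u * ((T - u) / c) ^ (k + 1))
      (((T - u) / c) ^ k * ((T - (k + 2) * u) / c)) u := by
    refine ((hasDerivAt_id' u).mul
      (((hasDerivAt_id' u).const_sub T).div_const c |>.pow (k + 1))).congr_deriv ?_
    simp only [Pi.pow_apply, Nat.add_sub_cancel]
    push_cast
    ring
  rw [hderiv.deriv]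
  have hpos : 0 < ((T - u) / c) ^ k := pow_pos (div_pos (by linarith) hc) k
  have hneg : (T - (k + 2) * u) / c < 0 := by
    rw [div_lt_iff₀ (by positivity)] at hlo
    exact div_neg_of_neg_of_pos (by push_cast at hlo; linarith) hc
  exact mul_neg_of_pos_of_neg hpos hneg

theorem Real.rpow_natCast_div_two {x : ℝ} (hx : 0 ≤ x) (m : ℕ) :
    x ^ ((m : ℝ) / 2) = √(x ^ m) := by
  rw [Real.sqrt_eq_rpow, ← Real.rpow_natCast, ← Real.rpow_mul hx, mul_one_div]

theorem Real.abs_mul_rpow_natCast_div_two (a : ℝ) {x : ℝ} (hx : 0 ≤ x) (m : ℕ) :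
    |a| * x ^ ((m : ℝ) / 2) = √(a ^ 2 * x ^ m) := by
  rw [Real.sqrt_mul (sq_nonneg a), Real.sqrt_sq_eq_abs, Real.rpow_natCast_div_two hx]

theorem Real.prod_le_sum_div_card_pow_s10 {ι : Type*} (s : Finset ι) {f : ι → ℝ}
    (hf : ∀ i ∈ s, 0 ≤ f i) : ∏ i ∈ s, f i ≤ ((∑ i ∈ s, f i) / #s) ^ #s := by
  rcases s.eq_empty_or_nonempty with rfl | hs
  · simp
  have hcard : (0 : ℝ) < #s := by exact_mod_cast hs.card_pos
  have amgm := Real.geom_mean_le_arith_mean_weighted s (fun _ => 1 / (#s : ℝ)) f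
    (fun _ _ => by positivity) (by simp [hcard.ne']) hf
  calc ∏ i ∈ s, f i = (∏ i ∈ s, f i ^ (1 / (#s : ℝ))) ^ #s := by
        rw [← prod_pow]
        refine prod_congr rfl fun i hi => ?_
        rw [← Real.rpow_natCast, ← Real.rpow_mul (hf i hi), one_div_mul_cancel hcard.ne',
          Real.rpow_one]
    _ ≤ ((∑ i ∈ s, f i) / #s) ^ #s := by
        gcongr
        · exact prod_nonneg fun i hi => Real.rpow_nonneg (hf i hi) _
        · simpa [← mul_sum, div_eq_inv_mul] using amgm

theorem Real.prod_le_mul_mean_erase_pow {ι : Type*} [Fintype ι] [DecidableEq ι] {f : ι → ℝ}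
    (hf : ∀ i, 0 ≤ f i) (j : ι) :
    ∏ i, f i ≤ f j * ((∑ i, f i - f j) / (Fintype.card ι - 1)) ^ (Fintype.card ι - 1) := by
  have hcard : #(univ.erase j) = Fintype.card ι - 1 := by
    rw [card_erase_of_mem (mem_univ j), card_univ]
  have hcast : ((Fintype.card ι - 1 : ℕ) : ℝ) = Fintype.card ι - 1 :=
    Nat.cast_pred (Fintype.card_pos_iff.mpr ⟨j⟩)
  rw [← mul_prod_erase _ _ (mem_univ j), ← sum_erase_eq_sub (mem_univ j), ← hcast, ← hcard]
  exact mul_le_mul_of_nonneg_left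
    (Real.prod_le_sum_div_card_pow_s10 _ fun i _ => hf i) (hf j)

variable {n : Type*} [Fintype n] [DecidableEq n]

theorem Matrix.IsHermitian.posSemidef_smul_one_sub {𝕜 : Type*} [RCLike 𝕜] {A : Matrix n n 𝕜}
    (hA : A.IsHermitian) {c : ℝ} (hc : ∀ i, hA.eigenvalues i ≤ c) :
    ((c : 𝕜) • 1 - A).PosSemidef := by
  rw [hA.spectral_theorem]
  have hconj : ((c : 𝕜) • 1 : Matrix n n 𝕜) =
      Unitary.conjStarAlgAut 𝕜 _ hA.eigenvectorUnitary ((c : 𝕜) • 1) := by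
    rw [map_smul, map_one]
  rw [hconj, ← map_sub, Unitary.conjStarAlgAut_apply, ← diagonal_one, ← diagonal_smul,
    diagonal_sub]
  refine (PosSemidef.diagonal fun i => ?_).mul_mul_conjTranspose_same _
  simp only [Pi.zero_apply, Pi.smul_apply, Function.comp_apply, smul_eq_mul, mul_one,
    ← RCLike.ofReal_sub, RCLike.ofReal_nonneg, sub_nonneg]
  exact hc i

theorem Matrix.IsHermitian.exists_dotProduct_mulVec_le [Nonempty n] {A : Matrix n n ℝ}
    (hA : A.IsHermitian) (v : n → ℝ) : ∃ j, v ⬝ᵥ (A *ᵥ v) ≤ hA.eigenvalues j * (v ⬝ᵥ v) := by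
  obtain ⟨j, -, hj⟩ := exists_max_image univ hA.eigenvalues univ_nonempty
  refine ⟨j, ?_⟩
  simpa only [star_trivial, Real.ringHom_apply, sub_mulVec, smul_mulVec, one_mulVec,
    dotProduct_sub, dotProduct_smul, smul_eq_mul, sub_nonneg] using
    (hA.posSemidef_smul_one_sub fun i => hj i (mem_univ i)).dotProduct_mulVec_nonneg v

theorem Matrix.sq_det_eq_prod_eigenvalues (M : Matrix n n ℝ) :
    M.det ^ 2 = ∏ i, (isHermitian_conjTranspose_mul_self M).eigenvalues i := by
  have h := (isHermitian_conjTranspose_mul_self M).det_eq_prod_eigenvalues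
  rw [det_mul, det_conjTranspose, star_trivial] at h
  simpa [sq] using h

theorem Matrix.sum_eigenvalues_conjTranspose_mul_self (M : Matrix n n ℝ) :
    ∑ i, (isHermitian_conjTranspose_mul_self M).eigenvalues i = ∑ i, ∑ j, M i j ^ 2 := by
  have h := (isHermitian_conjTranspose_mul_self M).trace_eq_sum_eigenvalues
  simp only [trace, diag, mul_apply, conjTranspose_apply, star_trivial, ← sq] at h
  rw [sum_comm] at h
  simpa using h.symm

theorem Matrix.eigenvalues_conjTranspose_mul_self_le_sum_sq (M : Matrix n n ℝ) (j : n) :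
    (isHermitian_conjTranspose_mul_self M).eigenvalues j ≤ ∑ i, ∑ j, M i j ^ 2 := by
  rw [← sum_eigenvalues_conjTranspose_mul_self]
  exact single_le_sum (fun i _ => eigenvalues_conjTranspose_mul_self_nonneg M i) (mem_univ j)

theorem Matrix.exists_sq_mean_le_eigenvalues [Nonempty n] (M : Matrix n n ℝ) :
    ∃ j, ((∑ i, ∑ j, M i j) / Fintype.card n) ^ 2 ≤
      (isHermitian_conjTranspose_mul_self M).eigenvalues j := by
  obtain ⟨j, hj⟩ := (isHermitian_conjTranspose_mul_self M).exists_dotProduct_mulVec_le 1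
  refine ⟨j, ?_⟩
  have hN : (0 : ℝ) < Fintype.card n := by exact_mod_cast Fintype.card_pos
  have hrows : (1 : n → ℝ) ⬝ᵥ (Mᴴ * M) *ᵥ 1 = ∑ i, (∑ j, M i j) ^ 2 := by
    rw [← mulVec_mulVec, dotProduct_mulVec, vecMul_conjTranspose, star_trivial, star_trivial]
    simp [dotProduct, mulVec, sq]
  have hCS := sq_sum_le_card_mul_sum_sq (s := univ) (f := fun i => ∑ j, M i j)
  simp only [card_univ, one_dotProduct_one] at hCS hj
  rw [div_pow, div_le_iff₀ (by positivity)]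
  nlinarith

theorem Matrix.sq_mean_le_sum_sq [Nonempty n] (M : Matrix n n ℝ) :
    ((∑ i, ∑ j, M i j) / Fintype.card n) ^ 2 ≤ ∑ i, ∑ j, M i j ^ 2 :=
  have ⟨j, hj⟩ := exists_sq_mean_le_eigenvalues M
  hj.trans (eigenvalues_conjTranspose_mul_self_le_sum_sq M j)

theorem Matrix.sq_det_le_of_mean_sq_le (M : Matrix n n ℝ) (hn : 1 < Fintype.card n)
    (h : (∑ i, ∑ j, M i j ^ 2) / Fintype.card n ≤ ((∑ i, ∑ j, M i j) / Fintype.card n) ^ 2) :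
    M.det ^ 2 ≤ ((∑ i, ∑ j, M i j) / Fintype.card n) ^ 2 *
      ((∑ i, ∑ j, M i j ^ 2 - ((∑ i, ∑ j, M i j) / Fintype.card n) ^ 2) /
        (Fintype.card n - 1)) ^ (Fintype.card n - 1) := by
  have : Nonempty n := Fintype.card_pos_iff.mp (by omega)
  set μ := (isHermitian_conjTranspose_mul_self M).eigenvalues
  obtain ⟨j, hj⟩ := exists_sq_mean_le_eigenvalues M
  have hcast : ((Fintype.card n - 1 : ℕ) : ℝ) + 1 = Fintype.card n := by
    rw [Nat.cast_pred (by omega), sub_add_cancel]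
  have hc : (0 : ℝ) < Fintype.card n - 1 := by
    rw [sub_pos]; exact_mod_cast hn
  have hanti := (strictAntiOn_mul_sub_div_pow (∑ i, ∑ j, M i j ^ 2) hc
    (Fintype.card n - 1)).antitoneOn
  rw [hcast] at hanti
  calc M.det ^ 2 = ∏ i, μ i := sq_det_eq_prod_eigenvalues M
    _ ≤ μ j * ((∑ i, ∑ j, M i j ^ 2 - μ j) / (Fintype.card n - 1)) ^ (Fintype.card n - 1) := by
      rw [← sum_eigenvalues_conjTranspose_mul_self]
      exact Real.prod_le_mul_mean_erase_pow (eigenvalues_conjTranspose_mul_self_nonneg M) j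
    _ ≤ _ := hanti ⟨h, sq_mean_le_sum_sq M⟩
      ⟨h.trans hj, eigenvalues_conjTranspose_mul_self_le_sum_sq M j⟩ hj

theorem abs_det_le_gasper_bound (n : ℕ) (hn : 2 ≤ n) (M : Matrix (Fin n) (Fin n) ℝ)
    (α β κ : ℝ) (hα : α = (∑ i, ∑ j, M i j) / n)
    (hβ : β = (∑ i, ∑ j, (M i j) ^ 2) / n)
    (hκ : κ = (n * β - α ^ 2) / (n - 1))
    (h : β ≤ α ^ 2) :
    |M.det| ≤ |α| * κ ^ (((n : ℝ) - 1) / 2)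
      ∧ |α| * κ ^ (((n : ℝ) - 1) / 2) ≤ β ^ ((n : ℝ) / 2)
      ∧ (β < α ^ 2 → |α| * κ ^ (((n : ℝ) - 1) / 2) < β ^ ((n : ℝ) / 2)) := by
  have : NeZero n := ⟨by omega⟩
  have hn1 : (0 : ℝ) < n - 1 := by
    rw [sub_pos]; exact_mod_cast hn
  have hcast : ((n - 1 : ℕ) : ℝ) = n - 1 := Nat.cast_pred (by omega)
  have hq : ∑ i, ∑ j, M i j ^ 2 = n * β := by rw [hβ]; field_simp
  have hβ0 : 0 ≤ β := by rw [hβ]; positivity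
  set g := fun u : ℝ => u * ((n * β - u) / (n - 1)) ^ (n - 1) with hg
  have hanti : StrictAntiOn g (Set.Icc β (n * β)) := by
    have := strictAntiOn_mul_sub_div_pow (n * β) hn1 (n - 1)
    rwa [hcast, sub_add_cancel, mul_div_cancel_left₀ _ (NeZero.ne _)] at this
  have hβmem : β ∈ Set.Icc β (n * β) := ⟨le_rfl, le_mul_of_one_le_left hβ0 (by linarith)⟩
  have hαmem : α ^ 2 ∈ Set.Icc β (n * β) := by
    have := sq_mean_le_sum_sq M
    rw [Fintype.card_fin, ← hα, hq] at this
    exact ⟨h, this⟩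
  have hdet : M.det ^ 2 ≤ g (α ^ 2) := by
    have := sq_det_le_of_mean_sq_le M (by rw [Fintype.card_fin]; omega)
      (by rwa [Fintype.card_fin, ← hα, ← hβ])
    rwa [Fintype.card_fin, ← hα, hq] at this
  have hκ0 : 0 ≤ κ := by
    rw [hκ]; exact div_nonneg (sub_nonneg.mpr hαmem.2) hn1.le
  have hgα : |α| * κ ^ (((n : ℝ) - 1) / 2) = √(g (α ^ 2)) := by
    rw [← hcast, Real.abs_mul_rpow_natCast_div_two α hκ0, hg, hκ]
  have hgβ : g β = β ^ n := by
    have hβκ : (n * β - β) / (n - 1) = β := by field_simp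
    rw [show g β = β * β ^ (n - 1) by simp only [hg, hβκ]]
    rw [← pow_succ', Nat.sub_add_cancel (by omega)]
  have hβn : β ^ ((n : ℝ) / 2) = √(β ^ n) := Real.rpow_natCast_div_two hβ0 n
  refine ⟨?_, ?_, fun hlt => ?_⟩
  · rw [hgα, ← Real.sqrt_sq_eq_abs]
    exact Real.sqrt_le_sqrt hdet
  · rw [hgα, hβn, ← hgβ]
    exact Real.sqrt_le_sqrt (hanti.antitoneOn hβmem hαmem h)
  · rw [hgα, hβn, ← hgβ]
    exact Real.sqrt_lt_sqrt ((sq_nonneg _).trans hdet) (hanti hβmem hαmem hlt)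
end
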